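/- A linear operator D on π₃ is a derivation of π₃ if and only if there exist complex numbers a₁₁, a₂₁, a₃₁, a₅₁, a₃₄, a₅₄ such that the matrix of D is [[a₁₁,0,0,0,0],[a₂₁,2a₁₁,0,0,0],[a₃₁,2a₂₁,3a₁₁,a₃₄,0],[0,0,0,a₁₁,0],[a₅₁,0,0,a₅₄,2a₁₁]]. -/

import Mathlib

/-!
Writing `eᵢ` for the basis vectors, the Leibniz rule on the five pairs
`(e₁,e₁), (e₄,e₁), (e₁,e₂), (e₁,e₄), (e₄,e₄)` already expresses every column `D eⱼ` in terms of
the six free entries: `e₄e₁ = 0` kills the entries `(4,1), (1,4), (2,4)`, the pairs `(e₁,e₁)` and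
`(e₁,e₂)` give the columns of `e₂ = e₁²` and `e₃ = e₁e₂`, and comparing the two expressions
`e₅ = e₁e₄ = e₄²` forces `D e₄` to have diagonal entry `a₁₁`. Conversely, a matrix of the stated
shape satisfies the Leibniz rule by a direct polynomial computation.
-/

noncomputable section

/-- The multiplication of the 5-dimensional naturally graded nilpotent associative
algebra `π₃`, given on the basis `e₁, …, e₅` (indices `0, …, 4`) by
`e₁e₁ = e₂`, `e₁e₂ = e₂e₁ = e₃`, `e₁e₄ = e₅`, `e₄e₄ = e₅`. -/
def pi3Mul (x y : Fin 5 → ℂ) : Fin 5 → ℂ :=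
  ![0, x 0 * y 0, x 0 * y 1 + x 1 * y 0, 0, x 0 * y 3 + x 3 * y 3]

/-- A derivation of `π₃`: a linear operator satisfying the Leibniz rule. -/
def IsPi3Der (D : (Fin 5 → ℂ) →ₗ[ℂ] (Fin 5 → ℂ)) : Prop :=
  ∀ x y, D (pi3Mul x y) = pi3Mul (D x) y + pi3Mul x (D y)

theorem LinearMap.toMatrix'_eq_iff_apply_single {R m n : Type*} [CommSemiring R] [Fintype n]
    [DecidableEq n] (f : (n → R) →ₗ[R] m → R) (M : Matrix m n R) :
    LinearMap.toMatrix' f = M ↔ ∀ j, f (Pi.single j 1) = M.col j := by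
  constructor
  · rintro rfl j
    rw [← LinearMap.toMatrix'_mulVec, Matrix.mulVec_single_one]
  · intro h
    ext i j
    rw [LinearMap.toMatrix'_apply, h]
    rfl

theorem pi3Mul_single_zero_left (v : Fin 5 → ℂ) :
    pi3Mul (Pi.single 0 1) v = ![0, v 0, v 1, 0, v 3] := by
  ext i; fin_cases i <;> simp [pi3Mul]

theorem pi3Mul_single_three_left (v : Fin 5 → ℂ) :
    pi3Mul (Pi.single 3 1) v = ![0, 0, 0, 0, v 3] := by
  ext i; fin_cases i <;> simp [pi3Mul]

theorem pi3Mul_single_zero_right (v : Fin 5 → ℂ) :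
    pi3Mul v (Pi.single 0 1) = ![0, v 0, v 1, 0, 0] := by
  ext i; fin_cases i <;> simp [pi3Mul]

theorem pi3Mul_single_one_right (v : Fin 5 → ℂ) :
    pi3Mul v (Pi.single 1 1) = ![0, 0, v 0, 0, 0] := by
  ext i; fin_cases i <;> simp [pi3Mul]

theorem pi3Mul_single_three_right (v : Fin 5 → ℂ) :
    pi3Mul v (Pi.single 3 1) = ![0, 0, 0, 0, v 0 + v 3] := by
  ext i; fin_cases i <;> simp [pi3Mul]

theorem pi3Mul_single_zero_single_zero :
    pi3Mul (Pi.single 0 1) (Pi.single 0 1) = Pi.single 1 1 := by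
  ext i; fin_cases i <;> simp [pi3Mul]

theorem pi3Mul_single_three_single_zero :
    pi3Mul (Pi.single 3 1) (Pi.single 0 1) = 0 := by
  ext i; fin_cases i <;> simp [pi3Mul]

theorem pi3Mul_single_zero_single_one :
    pi3Mul (Pi.single 0 1) (Pi.single 1 1) = Pi.single 2 1 := by
  ext i; fin_cases i <;> simp [pi3Mul]

theorem pi3Mul_single_zero_single_three :
    pi3Mul (Pi.single 0 1) (Pi.single 3 1) = Pi.single 4 1 := by
  ext i; fin_cases i <;> simp [pi3Mul]

theorem pi3Mul_single_three_single_three :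
    pi3Mul (Pi.single 3 1) (Pi.single 3 1) = Pi.single 4 1 := by
  ext i; fin_cases i <;> simp [pi3Mul]

namespace IsPi3Der

variable {D : (Fin 5 → ℂ) →ₗ[ℂ] (Fin 5 → ℂ)} (hD : IsPi3Der D)
include hD

theorem leibniz_single_three_single_zero :
    pi3Mul (D (Pi.single 3 1)) (Pi.single 0 1) + pi3Mul (Pi.single 3 1) (D (Pi.single 0 1)) =
      0 := by
  rw [← hD, pi3Mul_single_three_single_zero, map_zero]

theorem apply_single_three_zero : D (Pi.single 3 1) 0 = 0 := by
  simpa [pi3Mul_single_zero_right, pi3Mul_single_three_left] using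
    congrFun hD.leibniz_single_three_single_zero 1

theorem apply_single_three_one : D (Pi.single 3 1) 1 = 0 := by
  simpa [pi3Mul_single_zero_right, pi3Mul_single_three_left] using
    congrFun hD.leibniz_single_three_single_zero 2

theorem apply_single_zero_three : D (Pi.single 0 1) 3 = 0 := by
  simpa [pi3Mul_single_zero_right, pi3Mul_single_three_left] using
    congrFun hD.leibniz_single_three_single_zero 4

theorem apply_single_one :
    D (Pi.single 1 1) = ![0, 2 * D (Pi.single 0 1) 0, 2 * D (Pi.single 0 1) 1, 0, 0] := by
  have h := hD (Pi.single 0 1) (Pi.single 0 1)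
  rw [pi3Mul_single_zero_single_zero, pi3Mul_single_zero_right, pi3Mul_single_zero_left] at h
  rw [h]
  ext i; fin_cases i <;> simp [hD.apply_single_zero_three] <;> ring

theorem apply_single_two :
    D (Pi.single 2 1) = ![0, 0, 3 * D (Pi.single 0 1) 0, 0, 0] := by
  have h := hD (Pi.single 0 1) (Pi.single 1 1)
  rw [pi3Mul_single_zero_single_one, pi3Mul_single_one_right, pi3Mul_single_zero_left,
    hD.apply_single_one] at h
  rw [h]
  ext i; fin_cases i <;> simp; ring

theorem apply_single_three_three : D (Pi.single 3 1) 3 = D (Pi.single 0 1) 0 := by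
  have h03 := hD (Pi.single 0 1) (Pi.single 3 1)
  have h33 := hD (Pi.single 3 1) (Pi.single 3 1)
  rw [pi3Mul_single_zero_single_three, pi3Mul_single_three_right, pi3Mul_single_zero_left] at h03
  rw [pi3Mul_single_three_single_three, pi3Mul_single_three_right, pi3Mul_single_three_left] at h33
  have h := congrFun (h03.symm.trans h33) 4
  simp only [Pi.add_apply, Matrix.cons_val, hD.apply_single_three_zero,
    hD.apply_single_zero_three] at h
  linear_combination -h

theorem apply_single_four :
    D (Pi.single 4 1) = ![0, 0, 0, 0, 2 * D (Pi.single 0 1) 0] := by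
  have h := hD (Pi.single 3 1) (Pi.single 3 1)
  rw [pi3Mul_single_three_single_three, pi3Mul_single_three_right, pi3Mul_single_three_left] at h
  rw [h]
  ext i; fin_cases i <;> simp [hD.apply_single_three_zero, hD.apply_single_three_three]; ring

end IsPi3Der

theorem isPi3Der_toLin' (a11 a21 a31 a51 a34 a54 : ℂ) :
    IsPi3Der (Matrix.toLin'
      !![a11, 0, 0, 0, 0;
         a21, 2 * a11, 0, 0, 0;
         a31, 2 * a21, 3 * a11, a34, 0;
         0, 0, 0, a11, 0;
         a51, 0, 0, a54, 2 * a11]) := by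
  intro x y
  ext i
  fin_cases i <;> simp [pi3Mul, Matrix.mulVec, dotProduct, Fin.sum_univ_five] <;> ring

theorem pi3_der_iff (D : (Fin 5 → ℂ) →ₗ[ℂ] (Fin 5 → ℂ)) :
    IsPi3Der D ↔
      ∃ a11 a21 a31 a51 a34 a54 : ℂ,
        LinearMap.toMatrix' D =
          !![a11, 0, 0, 0, 0;
             a21, 2 * a11, 0, 0, 0;
             a31, 2 * a21, 3 * a11, a34, 0;
             0, 0, 0, a11, 0;
             a51, 0, 0, a54, 2 * a11] := by
  constructor
  · intro hD
    refine ⟨D (Pi.single 0 1) 0, D (Pi.single 0 1) 1, D (Pi.single 0 1) 2, D (Pi.single 0 1) 4,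
      D (Pi.single 3 1) 2, D (Pi.single 3 1) 4, ?_⟩
    rw [LinearMap.toMatrix'_eq_iff_apply_single]
    intro j
    ext i
    fin_cases j <;> fin_cases i <;>
      simp [hD.apply_single_one, hD.apply_single_two, hD.apply_single_four,
        hD.apply_single_three_zero, hD.apply_single_three_one, hD.apply_single_zero_three,
        hD.apply_single_three_three]
  · rintro ⟨a11, a21, a31, a51, a34, a54, hM⟩
    rw [← Matrix.toLin'_toMatrix' D, hM]
    exact isPi3Der_toLin' a11 a21 a31 a51 a34 a54
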